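/- For every real number k and every complex number z with Im z > 0, P_k(z − 3/8) + P_k(z − 1/8) + P_k(z + 1/8) + P_k(z + 3/8) = 4·P_k(8z) − 4·(1 + 2^{−k} + 4^{−k}) · ( P_k(4z) − (1 + 2^{1−k})·P_k(8z) + 2^{1−k}·P_k(16z) ). -/

import Mathlib

/-!
Write `q = e^{2πiz}`, `ζ = e^{πi/4}` and `f(y) = y/(1-y)`, so that
`P_k(z + a/8) = Σ n^{-k} f(q^n ζ^{an})` (the shifts `-3/8, -1/8` act as `a = 5, 7`).
For fixed `n` the four terms with `a ∈ {1, 3, 5, 7}` collapse under `f(y) + f(-y) = 2 f(y²)`: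
if `n = 2^j m` with `m` odd and `j ≤ 2`, then `w = ζ^n` satisfies `w^{2^{2-j}} = -1` and the four
terms add up to `8 f(q^{8m}) - 4 f(q^{4m})`, while for `8 ∣ n` they add up to `4 f(q^n)`.
Splitting the sum over `n` by `j` thus leaves odd-indexed parts of `P_k(4z)` and `P_k(8z)`, weighted
by `1 + 2^{-k} + 4^{-k}`, and an odd-indexed part is `P_k(cz) - 2^{-k} P_k(2cz)`.
-/

/-- P_k(z) = Σ_{n=1}^∞ n^{−k} · e^{2πinz}/(1 − e^{2πinz}), for real k and Im z > 0. -/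
noncomputable def P (k : ℝ) (z : ℂ) : ℂ :=
  ∑' n : ℕ+, (n : ℂ) ^ (-(k : ℂ)) *
    (Complex.exp (2 * Real.pi * Complex.I * n * z) /
      (1 - Complex.exp (2 * Real.pi * Complex.I * n * z)))

open Complex
open scoped Real

section LambertKernel

variable {𝕜 : Type*} [NormedField 𝕜]

def lambertKernel (y : 𝕜) : 𝕜 := y / (1 - y)

lemma one_sub_ne_zero_of_norm_lt_one {y : 𝕜} (hy : ‖y‖ < 1) : 1 - y ≠ 0 :=
  sub_ne_zero.mpr (by rintro rfl; simp at hy)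

lemma norm_pow_lt_one {y : 𝕜} (hy : ‖y‖ < 1) {n : ℕ} (hn : n ≠ 0) : ‖y ^ n‖ < 1 := by
  rw [norm_pow]; exact pow_lt_one₀ (norm_nonneg y) hy hn

lemma lambertKernel_add_neg {y : 𝕜} (hy : ‖y‖ < 1) :
    lambertKernel y + lambertKernel (-y) = 2 * lambertKernel (y ^ 2) := by
  have h₁ := one_sub_ne_zero_of_norm_lt_one hy
  have h₂ := one_sub_ne_zero_of_norm_lt_one (y := -y) (by rwa [norm_neg])
  have h₃ : 1 - y ^ 2 = (1 - y) * (1 - -y) := by ring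
  simp only [lambertKernel, h₃]
  field_simp
  ring

lemma lambertKernel_neg {y : 𝕜} (hy : ‖y‖ < 1) :
    lambertKernel (-y) = 2 * lambertKernel (y ^ 2) - lambertKernel y := by
  rw [← lambertKernel_add_neg hy]; ring

lemma norm_eq_one_of_pow_eq_neg_one {w : 𝕜} {d : ℕ} (hd : d ≠ 0) (hw : w ^ d = -1) : ‖w‖ = 1 := by
  have := congrArg norm hw
  rwa [norm_pow, norm_neg, norm_one, pow_eq_one_iff_of_nonneg (norm_nonneg w) hd] at this

theorem lambertKernel_sum_odd_pow_of_pow_eq_neg_one {x w : 𝕜} {d : ℕ} (hd : d ∣ 4)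
    (hx : ‖x‖ < 1) (hw : w ^ d = -1) :
    lambertKernel (x * w) + lambertKernel (x * w ^ 3) + lambertKernel (x * w ^ 5) +
        lambertKernel (x * w ^ 7) =
      8 * lambertKernel (x ^ (2 * d)) - 4 * lambertKernel (x ^ d) := by
  have hw₁ : ‖w‖ = 1 := norm_eq_one_of_pow_eq_neg_one (by rintro rfl; simp at hd) hw
  have hxw : ‖x * w‖ < 1 := by simpa [hw₁] using hx
  obtain rfl | rfl | rfl : d = 1 ∨ d = 2 ∨ d = 4 := by
    have := Nat.le_of_dvd four_pos hd
    interval_cases d <;> simp_all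
  · obtain rfl : w = -1 := by simpa using hw
    calc _ = 4 * lambertKernel (-x) := by ring_nf
      _ = _ := by rw [lambertKernel_neg hx]; ring_nf
  · have h₃ : x * w ^ 3 = -(x * w) := by linear_combination x * w * hw
    have h₅ : x * w ^ 5 = x * w := by linear_combination x * w * (w ^ 2 - 1) * hw
    have h₇ : x * w ^ 7 = -(x * w) := by linear_combination x * w * (w ^ 4 - w ^ 2 + 1) * hw
    have h₂ : (x * w) ^ 2 = -x ^ 2 := by linear_combination x ^ 2 * hw
    calc _ = 2 * (lambertKernel (x * w) + lambertKernel (-(x * w))) := by rw [h₃, h₅, h₇]; ring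
      _ = 4 * lambertKernel (-x ^ 2) := by
        rw [lambertKernel_add_neg hxw, h₂]; ring
      _ = _ := by rw [lambertKernel_neg (norm_pow_lt_one hx two_ne_zero), ← pow_mul]; ring
  · have h₅ : x * w ^ 5 = -(x * w) := by linear_combination x * w * hw
    have h₇ : x * w ^ 7 = -(x * w ^ 3) := by linear_combination x * w ^ 3 * hw
    have h₆ : (x * w ^ 3) ^ 2 = -(x * w) ^ 2 := by linear_combination x ^ 2 * w ^ 2 * hw
    have h₄ : ((x * w) ^ 2) ^ 2 = -x ^ 4 := by linear_combination x ^ 4 * hw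
    calc _ = (lambertKernel (x * w) + lambertKernel (-(x * w))) +
          (lambertKernel (x * w ^ 3) + lambertKernel (-(x * w ^ 3))) := by rw [h₅, h₇]; ring
      _ = 2 * (lambertKernel ((x * w) ^ 2) + lambertKernel (-(x * w) ^ 2)) := by
        rw [lambertKernel_add_neg hxw, lambertKernel_add_neg (by simpa [hw₁] using hx), h₆]; ring
      _ = 4 * lambertKernel (-x ^ 4) := by
        rw [lambertKernel_add_neg (norm_pow_lt_one hxw two_ne_zero), h₄]; ring
      _ = _ := by rw [lambertKernel_neg (norm_pow_lt_one hx four_ne_zero), ← pow_mul]; ring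

end LambertKernel

theorem PNat.tsum_eq_tsum_odd_add_tsum_two_mul {α : Type*} [AddCommGroup α] [UniformSpace α]
    [IsUniformAddGroup α] [CompleteSpace α] [T2Space α] {f : ℕ+ → α} (hf : Summable f) :
    ∑' n, f n = ∑' n : {n : ℕ+ | Odd (n : ℕ)}, f n + ∑' n, f (2 * n) := by
  have hodd : (Set.range (2 * · : ℕ+ → ℕ+))ᶜ = {n : ℕ+ | Odd (n : ℕ)} := by
    ext n
    simp only [Set.mem_compl_iff, Set.mem_range, Set.mem_ofPred_eq, ← Nat.not_even_iff_odd,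
      even_iff_two_dvd]
    refine not_congr ⟨fun ⟨m, hm⟩ ↦ ⟨m, by simp [← hm]⟩, fun ⟨m, hm⟩ ↦ ?_⟩
    exact ⟨⟨m, Nat.pos_of_mul_pos_left (hm ▸ n.pos)⟩, PNat.eq hm.symm⟩
  rw [← hf.tsum_subtype_add_tsum_subtype_compl (Set.range (2 * ·)), add_comm, hodd,
    tsum_range f (mul_right_injective (2 : ℕ+))]

noncomputable def lambertTerm (s q : ℂ) (n : ℕ+) : ℂ := (n : ℂ) ^ s * lambertKernel (q ^ (n : ℕ))

noncomputable def lambertSeries (s q : ℂ) : ℂ := ∑' n, lambertTerm s q n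

noncomputable def lambertTermOddPowSum (s q ζ : ℂ) (n : ℕ+) : ℂ :=
  lambertTerm s (q * ζ) n + lambertTerm s (q * ζ ^ 3) n + lambertTerm s (q * ζ ^ 5) n +
    lambertTerm s (q * ζ ^ 7) n

section LambertSeries

variable (s : ℂ) {q ζ : ℂ}

lemma summable_lambertTerm (hq : ‖q‖ < 1) : Summable (lambertTerm s q) := by
  set K := ⌈s.re⌉₊
  have hK : Summable fun n : ℕ ↦ ‖(n : ℂ) ^ K * q ^ n / (1 - q ^ n)‖ :=
    summable_norm_iff.mpr (summable_norm_pow_mul_geometric_div_one_sub K hq)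
  refine Summable.of_norm_bounded (hK.comp_injective PNat.coe_injective) fun n ↦ ?_
  have hs : ‖(n : ℂ) ^ s‖ ≤ ‖(n : ℂ) ^ K‖ := by
    simpa using norm_natCast_cpow_le_norm_natCast_cpow_of_pos n.pos (w := s) (z := K)
      (by simpa using Nat.le_ceil s.re)
  simpa only [lambertTerm, lambertKernel, norm_mul, mul_div_assoc, Function.comp_apply]
    using mul_le_mul_of_nonneg_right hs (norm_nonneg _)

lemma lambertTerm_mul (c n : ℕ+) :
    lambertTerm s q (c * n) = (c : ℂ) ^ s * lambertTerm s (q ^ (c : ℕ)) n := by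
  simp only [lambertTerm, PNat.mul_coe, Nat.cast_mul, natCast_mul_natCast_cpow, pow_mul]
  ring

lemma lambertTerm_mul_of_pow_eq_one {n : ℕ+} (hζ : ζ ^ (n : ℕ) = 1) :
    lambertTerm s (q * ζ) n = lambertTerm s q n := by
  rw [lambertTerm, mul_pow, hζ, mul_one, lambertTerm]

lemma tsum_odd_lambertTerm (hq : ‖q‖ < 1) :
    ∑' n : {n : ℕ+ | Odd (n : ℕ)}, lambertTerm s q n =
      lambertSeries s q - 2 ^ s * lambertSeries s (q ^ 2) := by
  rw [lambertSeries, PNat.tsum_eq_tsum_odd_add_tsum_two_mul (summable_lambertTerm s hq),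
    lambertSeries, ← tsum_mul_left]
  simp [lambertTerm_mul]

lemma summable_lambertTermOddPowSum (hq : ‖q‖ < 1) (hζ : ‖ζ‖ = 1) :
    Summable (lambertTermOddPowSum s q ζ) := by
  have h (j : ℕ) : Summable (lambertTerm s (q * ζ ^ j)) :=
    summable_lambertTerm s (by simpa [hζ] using hq)
  exact (((pow_one ζ ▸ h 1).add (h 3)).add (h 5)).add (h 7)

lemma tsum_lambertTermOddPowSum (hq : ‖q‖ < 1) (hζ : ‖ζ‖ = 1) :
    ∑' n, lambertTermOddPowSum s q ζ n = lambertSeries s (q * ζ) + lambertSeries s (q * ζ ^ 3) +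
      lambertSeries s (q * ζ ^ 5) + lambertSeries s (q * ζ ^ 7) := by
  have h (j : ℕ) : Summable (lambertTerm s (q * ζ ^ j)) :=
    summable_lambertTerm s (by simpa [hζ] using hq)
  have h₁ := pow_one ζ ▸ h 1
  rw [lambertSeries, lambertSeries, lambertSeries, lambertSeries, ← h₁.tsum_add (h 3),
    ← (h₁.add (h 3)).tsum_add (h 5), ← ((h₁.add (h 3)).add (h 5)).tsum_add (h 7)]
  rfl

lemma lambertTermOddPowSum_of_pow_eq_neg_one (hq : ‖q‖ < 1) {n : ℕ+} {d : ℕ} (hd : d ∣ 4)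
    (hζ : (ζ ^ (n : ℕ)) ^ d = -1) :
    lambertTermOddPowSum s q ζ n =
      8 * lambertTerm s (q ^ (2 * d)) n - 4 * lambertTerm s (q ^ d) n := by
  have key := lambertKernel_sum_odd_pow_of_pow_eq_neg_one hd (norm_pow_lt_one hq n.ne_zero) hζ
  simp only [lambertTermOddPowSum, lambertTerm, mul_pow, ← pow_mul, mul_comm _ (n : ℕ)] at key ⊢
  linear_combination ((n : ℕ) : ℂ) ^ s * key

lemma lambertTermOddPowSum_mul_of_odd (hq : ‖q‖ < 1) (hζ : ζ ^ 4 = -1) {c m : ℕ+}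
    (hc : (c : ℕ) ∣ 4) (hm : Odd (m : ℕ)) :
    lambertTermOddPowSum s q ζ (c * m) =
      (c : ℂ) ^ s * (8 * lambertTerm s (q ^ 8) m - 4 * lambertTerm s (q ^ 4) m) := by
  have hcd : (c : ℕ) * (4 / c) = 4 := Nat.mul_div_cancel' hc
  have hζcm : (ζ ^ ((c * m : ℕ+) : ℕ)) ^ (4 / c : ℕ) = -1 := by
    rw [← pow_mul, PNat.mul_coe, mul_right_comm, hcd, pow_mul, hζ, hm.neg_one_pow]
  rw [lambertTermOddPowSum_of_pow_eq_neg_one s hq (Nat.div_dvd_of_dvd hc) hζcm, lambertTerm_mul,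
    lambertTerm_mul, ← pow_mul, ← pow_mul, show 2 * (4 / (c : ℕ)) * c = 8 by
      rw [mul_assoc, mul_comm _ (c : ℕ), hcd]; rfl, show 4 / (c : ℕ) * c = 4 by rw [mul_comm, hcd]]
  ring

lemma lambertTermOddPowSum_eight_mul (hζ : ζ ^ 4 = -1) (m : ℕ+) :
    lambertTermOddPowSum s q ζ (8 * m) = 8 ^ s * (4 * lambertTerm s (q ^ 8) m) := by
  have hζ₈ (j : ℕ) : (ζ ^ j) ^ ((8 * m : ℕ+) : ℕ) = 1 := by
    rw [← pow_mul, show j * ((8 * m : ℕ+) : ℕ) = 4 * (2 * (j * m)) by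
      simp only [PNat.mul_coe, PNat.val_ofNat]; ring, pow_mul, hζ, pow_mul, neg_one_sq, one_pow]
  rw [lambertTermOddPowSum, lambertTerm_mul_of_pow_eq_one s (by simpa using hζ₈ 1),
    lambertTerm_mul_of_pow_eq_one s (hζ₈ 3), lambertTerm_mul_of_pow_eq_one s (hζ₈ 5),
    lambertTerm_mul_of_pow_eq_one s (hζ₈ 7), lambertTerm_mul]
  simp only [PNat.val_ofNat, Nat.cast_ofNat]
  ring

lemma tsum_odd_lambertTermOddPowSum_mul (hq : ‖q‖ < 1) (hζ : ζ ^ 4 = -1) {c : ℕ+}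
    (hc : (c : ℕ) ∣ 4) :
    ∑' m : {n : ℕ+ | Odd (n : ℕ)}, lambertTermOddPowSum s q ζ (c * m) =
      c ^ s * (8 * (lambertSeries s (q ^ 8) - 2 ^ s * lambertSeries s (q ^ 16)) -
        4 * (lambertSeries s (q ^ 4) - 2 ^ s * lambertSeries s (q ^ 8))) := by
  have hq₄ := norm_pow_lt_one hq four_ne_zero
  have hq₈ := norm_pow_lt_one hq (by norm_num : 8 ≠ 0)
  have h₈ : Summable fun m : {n : ℕ+ | Odd (n : ℕ)} ↦ 8 * lambertTerm s (q ^ 8) m :=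
    ((summable_lambertTerm s hq₈).subtype _).mul_left 8
  have h₄ : Summable fun m : {n : ℕ+ | Odd (n : ℕ)} ↦ 4 * lambertTerm s (q ^ 4) m :=
    ((summable_lambertTerm s hq₄).subtype _).mul_left 4
  rw [tsum_congr fun m ↦ lambertTermOddPowSum_mul_of_odd s hq hζ hc m.2, tsum_mul_left,
    h₈.tsum_sub h₄, tsum_mul_left, tsum_mul_left, tsum_odd_lambertTerm s hq₈,
    tsum_odd_lambertTerm s hq₄, ← pow_mul, ← pow_mul]

theorem lambertSeries_add_eighth_roots (hq : ‖q‖ < 1) (hζ : ζ ^ 4 = -1) :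
    lambertSeries s (q * ζ) + lambertSeries s (q * ζ ^ 3) + lambertSeries s (q * ζ ^ 5) +
        lambertSeries s (q * ζ ^ 7) =
      4 * lambertSeries s (q ^ 8) - 4 * (1 + 2 ^ s + 4 ^ s) *
        (lambertSeries s (q ^ 4) - (1 + 2 * 2 ^ s) * lambertSeries s (q ^ 8) +
          2 * 2 ^ s * lambertSeries s (q ^ 16)) := by
  have hζ₁ : ‖ζ‖ = 1 := norm_eq_one_of_pow_eq_neg_one four_ne_zero hζ
  have hT := summable_lambertTermOddPowSum s hq hζ₁
  have hT₂ : Summable fun n ↦ lambertTermOddPowSum s q ζ (2 * n) :=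
    hT.comp_injective (mul_right_injective 2)
  have hT₄ : Summable fun n ↦ lambertTermOddPowSum s q ζ (4 * n) :=
    hT.comp_injective (mul_right_injective 4)
  have h₂₂ (n : ℕ+) : 2 * (2 * n) = 4 * n := by rw [← mul_assoc]; rfl
  have h₄₂ (n : ℕ+) : 4 * (2 * n) = 8 * n := by rw [← mul_assoc]; rfl
  have h₁ := tsum_odd_lambertTermOddPowSum_mul s hq hζ (c := 1) (one_dvd 4)
  simp only [one_mul, PNat.val_ofNat, Nat.cast_one, one_cpow] at h₁
  have h₄ : (4 : ℂ) ^ s = 2 ^ s * 2 ^ s := by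
    simpa [show (4 : ℂ) = 2 * 2 by norm_num] using natCast_mul_natCast_cpow 2 2 s
  have h₈ : (8 : ℂ) ^ s = 2 ^ s * 4 ^ s := by
    simpa [show (8 : ℂ) = 2 * 4 by norm_num] using natCast_mul_natCast_cpow 2 4 s
  rw [← tsum_lambertTermOddPowSum s hq hζ₁, PNat.tsum_eq_tsum_odd_add_tsum_two_mul hT,
    PNat.tsum_eq_tsum_odd_add_tsum_two_mul hT₂]
  simp only [h₂₂]
  rw [PNat.tsum_eq_tsum_odd_add_tsum_two_mul hT₄]
  simp only [h₄₂, lambertTermOddPowSum_eight_mul s hζ, tsum_mul_left]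
  rw [h₁, tsum_odd_lambertTermOddPowSum_mul s hq hζ (c := 2) (by norm_num),
    tsum_odd_lambertTermOddPowSum_mul s hq hζ (c := 4) (by norm_num), ← lambertSeries]
  simp only [PNat.val_ofNat, Nat.cast_ofNat, h₈, h₄]
  ring

end LambertSeries

lemma P_eq_lambertSeries (k : ℝ) (z : ℂ) : P k z = lambertSeries (-k) (cexp (2 * π * I * z)) := by
  refine tsum_congr fun n ↦ ?_
  rw [lambertTerm, lambertKernel, ← exp_nat_mul]
  ring_nf

lemma P_add_intCast (k : ℝ) (z : ℂ) (b : ℤ) : P k (z + b) = P k z := by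
  rw [P_eq_lambertSeries, P_eq_lambertSeries, mul_add, exp_add,
    show 2 * π * I * (b : ℂ) = b * (2 * π * I) by ring, exp_int_mul_two_pi_mul_I, mul_one]

lemma P_add_natCast_div (k : ℝ) (z : ℂ) (a c : ℕ) :
    P k (z + a / c) = lambertSeries (-k) (cexp (2 * π * I * z) * cexp (2 * π * I / c) ^ a) := by
  rw [P_eq_lambertSeries, mul_add, exp_add, ← exp_nat_mul]
  ring_nf

lemma P_natCast_mul (k : ℝ) (z : ℂ) (c : ℕ) :
    P k (c * z) = lambertSeries (-k) (cexp (2 * π * I * z) ^ c) := by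
  rw [P_eq_lambertSeries, ← exp_nat_mul]
  ring_nf

lemma cexp_two_pi_I_div_eight_pow_four : cexp (2 * π * I / 8) ^ 4 = -1 := by
  rw [← exp_nat_mul, show ((4 : ℕ) : ℂ) * (2 * π * I / 8) = π * I by push_cast; ring]
  exact exp_pi_mul_I

theorem octupling (k : ℝ) (z : ℂ) (hz : 0 < z.im) :
    P k (z - 3 / 8) + P k (z - 1 / 8) + P k (z + 1 / 8) + P k (z + 3 / 8) =
      4 * P k (8 * z)
        - 4 * (1 + (((2 : ℝ) ^ (-k) : ℝ) : ℂ) + (((4 : ℝ) ^ (-k) : ℝ) : ℂ)) *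
            (P k (4 * z) - (1 + (((2 : ℝ) ^ (1 - k) : ℝ) : ℂ)) * P k (8 * z)
              + (((2 : ℝ) ^ (1 - k) : ℝ) : ℂ) * P k (16 * z)) := by
  have h2 : (2 : ℝ) ^ (1 - k) = 2 * 2 ^ (-k) := by
    rw [sub_eq_add_neg, Real.rpow_add two_pos, Real.rpow_one]
  rw [h2, show z - 3 / 8 = z + (5 : ℕ) / (8 : ℕ) + (-1 : ℤ) by push_cast; ring,
    show z - 1 / 8 = z + (7 : ℕ) / (8 : ℕ) + (-1 : ℤ) by push_cast; ring,
    show z + 1 / 8 = z + (1 : ℕ) / (8 : ℕ) by push_cast; ring,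
    show z + 3 / 8 = z + (3 : ℕ) / (8 : ℕ) by push_cast; ring,
    show 4 * z = (4 : ℕ) * z by norm_cast, show 8 * z = (8 : ℕ) * z by norm_cast,
    show 16 * z = (16 : ℕ) * z by norm_cast]
  simp only [P_add_intCast, P_add_natCast_div, P_natCast_mul]
  simp only [pow_one, Nat.cast_ofNat, ofReal_mul, ofReal_cpow zero_le_two, ofReal_cpow zero_le_four,
    ofReal_neg, ofReal_ofNat]
  linear_combination lambertSeries_add_eighth_roots (-k)
    (UpperHalfPlane.norm_exp_two_pi_I_lt_one ⟨z, hz⟩) cexp_two_pi_I_div_eight_pow_four
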